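/- arXiv:1202.5464 — 4 statements merged into one kernel-verified Lean document; each statement's English description precedes it below -/
import Mathlib

section
/- With the notation of the gluing construction: if d₁ is a metric on X₁ ⊔ X₂ and d₃ a metric on X₂ ⊔ X₃ extending the metrics of the pieces (X₂ nonempty and compact), and d is the glued metric on X₁ ⊔ X₂ ⊔ X₃, then the Hausdorff distance satisfies d_H^d(X₁, X₃) ≤ d_H^{d₁}(X₁, X₂) + d_H^{d₃}(X₂, X₃). -/
open Metric Set

/-- `D` satisfies the axioms of a metric on `α`. -/
def IsMetricOn {α : Type*} (D : α → α → ℝ) : Prop :=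
  (∀ a b, 0 ≤ D a b) ∧ (∀ a b, D a b = 0 ↔ a = b) ∧ (∀ a b, D a b = D b a) ∧
    ∀ a b c, D a c ≤ D a b + D b c

/-- The Hausdorff distance between `A` and `B` with respect to the distance
function `D`: the infimum of `ε > 0` with `A ⊆ B^ε` and `B ⊆ A^ε`. -/
noncomputable def hDistOn {α : Type*} (D : α → α → ℝ) (A B : Set α) : ℝ :=
  sInf {ε : ℝ | 0 < ε ∧ (∀ a ∈ A, ∃ b ∈ B, D a b < ε) ∧ (∀ b ∈ B, ∃ a ∈ A, D a b < ε)}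

/-- The glued distance on `X₁ ⊔ X₂ ⊔ X₃` obtained from a metric `d₁` on `X₁ ⊔ X₂`
and a metric `d₃` on `X₂ ⊔ X₃`, with
`d(x,y) = inf_{z ∈ X₂} (d₁(x,z) + d₃(z,y))` for `x ∈ X₁`, `y ∈ X₃`. -/
noncomputable def glueDist {X₁ X₂ X₃ : Type*}
    (d₁ : X₁ ⊕ X₂ → X₁ ⊕ X₂ → ℝ) (d₃ : X₂ ⊕ X₃ → X₂ ⊕ X₃ → ℝ) :
    X₁ ⊕ X₂ ⊕ X₃ → X₁ ⊕ X₂ ⊕ X₃ → ℝ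
  | Sum.inl x, Sum.inl x' => d₁ (Sum.inl x) (Sum.inl x')
  | Sum.inl x, Sum.inr (Sum.inl z) => d₁ (Sum.inl x) (Sum.inr z)
  | Sum.inr (Sum.inl z), Sum.inl x => d₁ (Sum.inr z) (Sum.inl x)
  | Sum.inr a, Sum.inr b => d₃ a b
  | Sum.inl x, Sum.inr (Sum.inr y) =>
      ⨅ z : X₂, (d₁ (Sum.inl x) (Sum.inr z) + d₃ (Sum.inl z) (Sum.inr y))
  | Sum.inr (Sum.inr y), Sum.inl x =>
      ⨅ z : X₂, (d₁ (Sum.inl x) (Sum.inr z) + d₃ (Sum.inl z) (Sum.inr y))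


/-- The defining set of `hDistOn` is nonempty for a metric extending the metrics of
two nonempty compact pieces. -/
lemma hSet_nonempty {A B : Type*} [MetricSpace A] [MetricSpace B]
    [Nonempty A] [Nonempty B] [CompactSpace A] [CompactSpace B]
    (D : A ⊕ B → A ⊕ B → ℝ) (h : IsMetricOn D)
    (hA : ∀ a a' : A, D (Sum.inl a) (Sum.inl a') = dist a a')
    (hB : ∀ b b' : B, D (Sum.inr b) (Sum.inr b') = dist b b') :
    {ε : ℝ | 0 < ε ∧ (∀ a ∈ Set.range (Sum.inl : A → A ⊕ B), ∃ b ∈ Set.range Sum.inr, D a b < ε)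
      ∧ (∀ b ∈ Set.range (Sum.inr : B → A ⊕ B), ∃ a ∈ Set.range Sum.inl, D a b < ε)}.Nonempty := by
  obtain ⟨a₀⟩ := ‹Nonempty A›
  obtain ⟨b₀⟩ := ‹Nonempty B›
  set C := D (Sum.inl a₀) (Sum.inr b₀) with hC
  have hbddA : Bornology.IsBounded (Set.univ : Set A) := isCompact_univ.isBounded
  have hbddB : Bornology.IsBounded (Set.univ : Set B) := isCompact_univ.isBounded
  refine ⟨Metric.diam (Set.univ : Set A) + C + Metric.diam (Set.univ : Set B) + 1, ?_, ?_, ?_⟩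
  · have := Metric.diam_nonneg (s := (Set.univ : Set A))
    have := Metric.diam_nonneg (s := (Set.univ : Set B))
    have := h.1 (Sum.inl a₀) (Sum.inr b₀)
    linarith
  · rintro _ ⟨a, rfl⟩
    refine ⟨Sum.inr b₀, ⟨b₀, rfl⟩, ?_⟩
    have h1 : D (Sum.inl a) (Sum.inr b₀) ≤ D (Sum.inl a) (Sum.inl a₀) + C :=
      h.2.2.2 _ _ _
    have h2 : D (Sum.inl a) (Sum.inl a₀) ≤ Metric.diam (Set.univ : Set A) := by
      rw [hA]; exact Metric.dist_le_diam_of_mem hbddA trivial trivial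
    have := Metric.diam_nonneg (s := (Set.univ : Set B))
    linarith
  · rintro _ ⟨b, rfl⟩
    refine ⟨Sum.inl a₀, ⟨a₀, rfl⟩, ?_⟩
    have h1 : D (Sum.inl a₀) (Sum.inr b) ≤ C + D (Sum.inr b₀) (Sum.inr b) :=
      h.2.2.2 _ _ _
    have h2 : D (Sum.inr b₀) (Sum.inr b) ≤ Metric.diam (Set.univ : Set B) := by
      rw [hB]; exact Metric.dist_le_diam_of_mem hbddB trivial trivial
    have := Metric.diam_nonneg (s := (Set.univ : Set A))
    linarith

/-- Gluing construction: if `d₁` is a metric on `X₁ ⊔ X₂` and `d₃` a metric on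
`X₂ ⊔ X₃` extending the metrics of the (nonempty compact) pieces, and `d` is the glued
metric on `X₁ ⊔ X₂ ⊔ X₃`, then
`d_H^d(X₁, X₃) ≤ d_H^{d₁}(X₁, X₂) + d_H^{d₃}(X₂, X₃)`. -/
theorem hDist_glueDist_le {X₁ X₂ X₃ : Type*}
    [MetricSpace X₁] [MetricSpace X₂] [MetricSpace X₃]
    [Nonempty X₁] [Nonempty X₂] [Nonempty X₃]
    [CompactSpace X₁] [CompactSpace X₂] [CompactSpace X₃]
    (d₁ : X₁ ⊕ X₂ → X₁ ⊕ X₂ → ℝ) (d₃ : X₂ ⊕ X₃ → X₂ ⊕ X₃ → ℝ)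
    (h₁ : IsMetricOn d₁) (h₃ : IsMetricOn d₃)
    (h₁X : ∀ x x' : X₁, d₁ (Sum.inl x) (Sum.inl x') = dist x x')
    (h₁Z : ∀ z z' : X₂, d₁ (Sum.inr z) (Sum.inr z') = dist z z')
    (h₃Z : ∀ z z' : X₂, d₃ (Sum.inl z) (Sum.inl z') = dist z z')
    (h₃Y : ∀ y y' : X₃, d₃ (Sum.inr y) (Sum.inr y') = dist y y') :
    hDistOn (glueDist d₁ d₃) (Set.range (Sum.inl : X₁ → X₁ ⊕ X₂ ⊕ X₃))
        (Set.range ((Sum.inr ∘ Sum.inr) : X₃ → X₁ ⊕ X₂ ⊕ X₃))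
      ≤ hDistOn d₁ (Set.range (Sum.inl : X₁ → X₁ ⊕ X₂)) (Set.range Sum.inr)
        + hDistOn d₃ (Set.range (Sum.inl : X₂ → X₂ ⊕ X₃)) (Set.range Sum.inr) := by

  set S₁ := {ε : ℝ | 0 < ε ∧ (∀ a ∈ Set.range (Sum.inl : X₁ → X₁ ⊕ X₂), ∃ b ∈ Set.range Sum.inr, d₁ a b < ε)
      ∧ (∀ b ∈ Set.range (Sum.inr : X₂ → X₁ ⊕ X₂), ∃ a ∈ Set.range Sum.inl, d₁ a b < ε)} with hS₁
  set S₃ := {ε : ℝ | 0 < ε ∧ (∀ a ∈ Set.range (Sum.inl : X₂ → X₂ ⊕ X₃), ∃ b ∈ Set.range Sum.inr, d₃ a b < ε)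
      ∧ (∀ b ∈ Set.range (Sum.inr : X₃ → X₂ ⊕ X₃), ∃ a ∈ Set.range Sum.inl, d₃ a b < ε)} with hS₃
  have hS₁ne : S₁.Nonempty := hSet_nonempty d₁ h₁ h₁X h₁Z
  have hS₃ne : S₃.Nonempty := hSet_nonempty d₃ h₃ h₃Z h₃Y
  have hS₁bdd : BddBelow S₁ := ⟨0, fun ε hε => le_of_lt hε.1⟩
  have hS₃bdd : BddBelow S₃ := ⟨0, fun ε hε => le_of_lt hε.1⟩
  have key : ∀ ε₁ ∈ S₁, ∀ ε₃ ∈ S₃,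
      hDistOn (glueDist d₁ d₃) (Set.range (Sum.inl : X₁ → X₁ ⊕ X₂ ⊕ X₃))
        (Set.range ((Sum.inr ∘ Sum.inr) : X₃ → X₁ ⊕ X₂ ⊕ X₃)) ≤ ε₁ + ε₃ := by
    intro ε₁ hε₁ ε₃ hε₃
    apply csInf_le ⟨0, fun ε hε => le_of_lt hε.1⟩
    have hbdd : ∀ (x : X₁) (y : X₃), BddBelow (Set.range fun z : X₂ =>
        d₁ (Sum.inl x) (Sum.inr z) + d₃ (Sum.inl z) (Sum.inr y)) := by
      intro x y
      exact ⟨0, by rintro _ ⟨z, rfl⟩; exact add_nonneg (h₁.1 _ _) (h₃.1 _ _)⟩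
    refine ⟨add_pos hε₁.1 hε₃.1, ?_, ?_⟩
    · rintro _ ⟨x, rfl⟩
      obtain ⟨_, ⟨z, rfl⟩, hz⟩ := hε₁.2.1 (Sum.inl x) ⟨x, rfl⟩
      obtain ⟨_, ⟨y, rfl⟩, hy⟩ := hε₃.2.1 (Sum.inl z) ⟨z, rfl⟩
      refine ⟨Sum.inr (Sum.inr y), ⟨y, rfl⟩, ?_⟩
      show (⨅ z' : X₂, (d₁ (Sum.inl x) (Sum.inr z') + d₃ (Sum.inl z') (Sum.inr y))) < ε₁ + ε₃
      calc (⨅ z' : X₂, (d₁ (Sum.inl x) (Sum.inr z') + d₃ (Sum.inl z') (Sum.inr y)))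
          ≤ d₁ (Sum.inl x) (Sum.inr z) + d₃ (Sum.inl z) (Sum.inr y) := ciInf_le (hbdd x y) z
        _ < ε₁ + ε₃ := add_lt_add hz hy
    · rintro _ ⟨y, rfl⟩
      obtain ⟨_, ⟨z, rfl⟩, hz⟩ := hε₃.2.2 (Sum.inr y) ⟨y, rfl⟩
      obtain ⟨_, ⟨x, rfl⟩, hx⟩ := hε₁.2.2 (Sum.inr z) ⟨z, rfl⟩
      refine ⟨Sum.inl x, ⟨x, rfl⟩, ?_⟩
      show (⨅ z' : X₂, (d₁ (Sum.inl x) (Sum.inr z') + d₃ (Sum.inl z') (Sum.inr y))) < ε₁ + ε₃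
      calc (⨅ z' : X₂, (d₁ (Sum.inl x) (Sum.inr z') + d₃ (Sum.inl z') (Sum.inr y)))
          ≤ d₁ (Sum.inl x) (Sum.inr z) + d₃ (Sum.inl z) (Sum.inr y) := ciInf_le (hbdd x y) z
        _ < ε₁ + ε₃ := add_lt_add hx hz
  have step1 : ∀ ε₃ ∈ S₃,
      hDistOn (glueDist d₁ d₃) (Set.range (Sum.inl : X₁ → X₁ ⊕ X₂ ⊕ X₃))
        (Set.range ((Sum.inr ∘ Sum.inr) : X₃ → X₁ ⊕ X₂ ⊕ X₃))
      ≤ hDistOn d₁ (Set.range (Sum.inl : X₁ → X₁ ⊕ X₂)) (Set.range Sum.inr) + ε₃ := by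
    intro ε₃ hε₃
    rw [← sub_le_iff_le_add]
    exact le_csInf hS₁ne fun ε₁ hε₁ => sub_le_iff_le_add.2
      (by have := key ε₁ hε₁ ε₃ hε₃; linarith)
  rw [← sub_le_iff_le_add']
  exact le_csInf hS₃ne fun ε₃ hε₃ => sub_le_iff_le_add'.2 (step1 ε₃ hε₃)
end

section
/- With the notation of the gluing construction: if μᵢ is a finite Borel measure on Xᵢ for i = 1,2,3, then d_P^d(μ₁, μ₃) ≤ d_P^{d₁}(μ₁, μ₂) + d_P^{d₃}(μ₂, μ₃), where d_P^d denotes the Prokhorov distance in X₁ ⊔ X₂ ⊔ X₃ with the glued metric d (and the μᵢ are regarded as measures on the disjoint union supported on Xᵢ). -/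
open MeasureTheory Metric Set

/-- The Prokhorov distance between two measures with respect to a distance function
`D`: the infimum of `ε > 0` such that `μ A ≤ ν (A^ε) + ε` and `ν A ≤ μ (A^ε) + ε` for
every closed `A`, where `A^ε = {x | ∃ y ∈ A, D x y < ε}` is the `ε`-halo of `A`. -/
noncomputable def pDistOn {α : Type*} [TopologicalSpace α] [MeasurableSpace α]
    (D : α → α → ℝ) (μ ν : Measure α) : ℝ :=
  sInf {ε : ℝ | 0 < ε ∧ ∀ A : Set α, IsClosed A →
    μ A ≤ ν {x | ∃ y ∈ A, D x y < ε} + ENNReal.ofReal ε ∧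
    ν A ≤ μ {x | ∃ y ∈ A, D x y < ε} + ENNReal.ofReal ε}

section GlueAux

variable {α β : Type*}

private lemma measEmb_inl [MeasurableSpace α] [MeasurableSpace β] :
    MeasurableEmbedding (Sum.inl : α → α ⊕ β) :=
  ⟨Sum.inl_injective, measurable_inl, fun _ hs => hs.inl_image⟩

private lemma measEmb_inr [MeasurableSpace α] [MeasurableSpace β] :
    MeasurableEmbedding (Sum.inr : β → α ⊕ β) :=
  ⟨Sum.inr_injective, measurable_inr, fun _ hs => hs.inr_image⟩

private lemma sInf_add_le {S T U : Set ℝ} (hS : S.Nonempty) (hT : T.Nonempty)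
    (hU : BddBelow U) (h : ∀ s ∈ S, ∀ t ∈ T, s + t ∈ U) :
    sInf U ≤ sInf S + sInf T := by
  have h1 : ∀ t ∈ T, sInf U - t ≤ sInf S := fun t ht =>
    le_csInf hS fun s hs => by
      have := csInf_le hU (h s hs t ht); linarith
  have h2 : sInf U - sInf S ≤ sInf T :=
    le_csInf hT fun t ht => by have := h1 t ht; linarith
  linarith

private lemma pSet_nonempty {γ : Type*} [TopologicalSpace γ] [MeasurableSpace γ]
    (D : γ → γ → ℝ) (μ ν : Measure γ) (hμ : μ univ ≠ ⊤) (hν : ν univ ≠ ⊤) :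
    {ε : ℝ | 0 < ε ∧ ∀ A : Set γ, IsClosed A →
      μ A ≤ ν {x | ∃ y ∈ A, D x y < ε} + ENNReal.ofReal ε ∧
      ν A ≤ μ {x | ∃ y ∈ A, D x y < ε} + ENNReal.ofReal ε}.Nonempty := by
  set M := max (μ univ).toReal (ν univ).toReal + 1 with hM
  have hμM : μ univ ≤ ENNReal.ofReal M := by
    rw [← ENNReal.ofReal_toReal hμ]
    exact ENNReal.ofReal_le_ofReal
      (by have := le_max_left (μ univ).toReal (ν univ).toReal; linarith)
  have hνM : ν univ ≤ ENNReal.ofReal M := by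
    rw [← ENNReal.ofReal_toReal hν]
    exact ENNReal.ofReal_le_ofReal
      (by have := le_max_right (μ univ).toReal (ν univ).toReal; linarith)
  have hM0 : 0 < M := by
    have := le_max_left (μ univ).toReal (ν univ).toReal
    have := ENNReal.toReal_nonneg (a := μ univ)
    linarith
  refine ⟨M, hM0, fun A _ => ⟨?_, ?_⟩⟩
  · exact le_trans (le_trans (measure_mono (subset_univ A)) hμM) (le_add_self)
  · exact le_trans (le_trans (measure_mono (subset_univ A)) hνM) (le_add_self)

end GlueAux

/-- Gluing construction: if `μᵢ` is a finite Borel measure on `Xᵢ` (`i = 1,2,3`), then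
`d_P^d(μ₁, μ₃) ≤ d_P^{d₁}(μ₁, μ₂) + d_P^{d₃}(μ₂, μ₃)`, where `d` is the glued metric on
`X₁ ⊔ X₂ ⊔ X₃` and the `μᵢ` are viewed as measures on the disjoint unions. -/
theorem pDist_glueDist_le {X₁ X₂ X₃ : Type*}
    [MetricSpace X₁] [MetricSpace X₂] [MetricSpace X₃]
    [MeasurableSpace X₁] [BorelSpace X₁] [MeasurableSpace X₂] [BorelSpace X₂]
    [MeasurableSpace X₃] [BorelSpace X₃]
    [Nonempty X₁] [Nonempty X₂] [Nonempty X₃]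
    [CompactSpace X₁] [CompactSpace X₂] [CompactSpace X₃]
    (μ₁ : Measure X₁) (μ₂ : Measure X₂) (μ₃ : Measure X₃)
    [IsFiniteMeasure μ₁] [IsFiniteMeasure μ₂] [IsFiniteMeasure μ₃]
    (d₁ : X₁ ⊕ X₂ → X₁ ⊕ X₂ → ℝ) (d₃ : X₂ ⊕ X₃ → X₂ ⊕ X₃ → ℝ)
    (h₁ : IsMetricOn d₁) (h₃ : IsMetricOn d₃)
    (h₁X : ∀ x x' : X₁, d₁ (Sum.inl x) (Sum.inl x') = dist x x')
    (h₁Z : ∀ z z' : X₂, d₁ (Sum.inr z) (Sum.inr z') = dist z z')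
    (h₃Z : ∀ z z' : X₂, d₃ (Sum.inl z) (Sum.inl z') = dist z z')
    (h₃Y : ∀ y y' : X₃, d₃ (Sum.inr y) (Sum.inr y') = dist y y') :
    pDistOn (glueDist d₁ d₃)
        (Measure.map (Sum.inl : X₁ → X₁ ⊕ X₂ ⊕ X₃) μ₁)
        (Measure.map ((Sum.inr ∘ Sum.inr) : X₃ → X₁ ⊕ X₂ ⊕ X₃) μ₃)
      ≤ pDistOn d₁ (Measure.map (Sum.inl : X₁ → X₁ ⊕ X₂) μ₁)
            (Measure.map Sum.inr μ₂)
        + pDistOn d₃ (Measure.map (Sum.inl : X₂ → X₂ ⊕ X₃) μ₂)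
            (Measure.map Sum.inr μ₃) := by
  classical
  obtain ⟨hd₁0, _, hd₁s, hd₁t⟩ := h₁
  obtain ⟨hd₃0, _, hd₃s, hd₃t⟩ := h₃
  have mι₁ : MeasurableEmbedding (Sum.inl : X₁ → X₁ ⊕ X₂ ⊕ X₃) := measEmb_inl
  have mι₃ : MeasurableEmbedding ((Sum.inr ∘ Sum.inr) : X₃ → X₁ ⊕ X₂ ⊕ X₃) :=
    measEmb_inr.comp measEmb_inr
  have m12l : MeasurableEmbedding (Sum.inl : X₁ → X₁ ⊕ X₂) := measEmb_inl
  have m12r : MeasurableEmbedding (Sum.inr : X₂ → X₁ ⊕ X₂) := measEmb_inr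
  have m23l : MeasurableEmbedding (Sum.inl : X₂ → X₂ ⊕ X₃) := measEmb_inl
  have m23r : MeasurableEmbedding (Sum.inr : X₃ → X₂ ⊕ X₃) := measEmb_inr
  have hne₁ := pSet_nonempty d₁ (Measure.map (Sum.inl : X₁ → X₁ ⊕ X₂) μ₁)
    (Measure.map Sum.inr μ₂)
    (by rw [m12l.map_apply]; exact measure_ne_top μ₁ _)
    (by rw [m12r.map_apply]; exact measure_ne_top μ₂ _)
  have hne₃ := pSet_nonempty d₃ (Measure.map (Sum.inl : X₂ → X₂ ⊕ X₃) μ₂)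
    (Measure.map Sum.inr μ₃)
    (by rw [m23l.map_apply]; exact measure_ne_top μ₂ _)
    (by rw [m23r.map_apply]; exact measure_ne_top μ₃ _)
  unfold pDistOn
  refine sInf_add_le hne₁ hne₃ ⟨0, fun ε hε => hε.1.le⟩ ?_
  rintro ε₁ ⟨hε₁0, hP₁⟩ ε₃ ⟨hε₃0, hP₃⟩
  refine ⟨by linarith, fun A hA => ?_⟩
  have ofadd : ENNReal.ofReal (ε₁ + ε₃) = ENNReal.ofReal ε₁ + ENNReal.ofReal ε₃ :=
    ENNReal.ofReal_add hε₁0.le hε₃0.le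
  constructor
  · -- μ₁' A ≤ μ₃' (halo) + ε
    set A₁ : Set X₁ := Sum.inl ⁻¹' A with hA₁def
    have hA₁c : IsClosed A₁ := hA.preimage continuous_inl
    set C : Set X₂ := {z | ∃ x ∈ A₁, d₁ (Sum.inl x) (Sum.inr z) ≤ ε₁} with hCdef
    set H : Set (X₁ ⊕ X₂ ⊕ X₃) :=
      {p | ∃ q ∈ A, glueDist d₁ d₃ p q < ε₁ + ε₃} with hHdef
    have step1 : μ₁ A₁ ≤ μ₂ (closure C) + ENNReal.ofReal ε₁ := by
      have hAbar : IsClosed (Sum.inl '' A₁ : Set (X₁ ⊕ X₂)) :=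
        Topology.IsClosedEmbedding.inl.isClosedMap _ hA₁c
      have h := (hP₁ _ hAbar).1
      rw [m12l.map_apply, m12r.map_apply, Sum.inl_injective.preimage_image] at h
      refine h.trans (add_le_add_left (measure_mono ?_) _)
      rintro z ⟨q, ⟨x, hx, rfl⟩, hq⟩
      exact subset_closure ⟨x, hx, by rw [hd₁s] at hq; exact hq.le⟩
    have step2 : μ₂ (closure C) ≤ μ₃ ((Sum.inr ∘ Sum.inr) ⁻¹' H) + ENNReal.ofReal ε₃ := by
      have hTc : IsClosed (Sum.inl '' closure C : Set (X₂ ⊕ X₃)) :=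
        Topology.IsClosedEmbedding.inl.isClosedMap _ isClosed_closure
      have h := (hP₃ _ hTc).1
      rw [m23l.map_apply, m23r.map_apply, Sum.inl_injective.preimage_image] at h
      refine h.trans (add_le_add_left (measure_mono ?_) _)
      rintro y ⟨q, ⟨z, hz, rfl⟩, hq⟩
      -- hq : d₃ (Sum.inr y) (Sum.inl z) < ε₃, hz : z ∈ closure C
      obtain ⟨z', hz'C, hzz'⟩ := Metric.mem_closure_iff.1 hz
        (ε₃ - d₃ (Sum.inr y) (Sum.inl z)) (by linarith)
      obtain ⟨x, hxA, hxz'⟩ := hz'C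
      show ∃ q ∈ A, glueDist d₁ d₃ (Sum.inr (Sum.inr y)) q < ε₁ + ε₃
      refine ⟨Sum.inl x, hxA, ?_⟩
      have hbd : BddBelow (range fun w : X₂ =>
          d₁ (Sum.inl x) (Sum.inr w) + d₃ (Sum.inl w) (Sum.inr y)) :=
        ⟨0, by rintro _ ⟨w, rfl⟩; exact add_nonneg (hd₁0 _ _) (hd₃0 _ _)⟩
      calc glueDist d₁ d₃ (Sum.inr (Sum.inr y)) (Sum.inl x)
          = ⨅ w : X₂, (d₁ (Sum.inl x) (Sum.inr w) + d₃ (Sum.inl w) (Sum.inr y)) := rfl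
        _ ≤ d₁ (Sum.inl x) (Sum.inr z') + d₃ (Sum.inl z') (Sum.inr y) := ciInf_le hbd z'
        _ < ε₁ + ε₃ := by
            have t1 : d₃ (Sum.inl z') (Sum.inr y)
                ≤ d₃ (Sum.inl z') (Sum.inl z) + d₃ (Sum.inl z) (Sum.inr y) := hd₃t _ _ _
            have t2 : d₃ (Sum.inl z') (Sum.inl z) = dist z' z := h₃Z _ _
            have t3 : d₃ (Sum.inl z) (Sum.inr y) = d₃ (Sum.inr y) (Sum.inl z) := hd₃s _ _
            have t4 : dist z z' = dist z' z := dist_comm _ _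
            linarith
    rw [mι₁.map_apply, mι₃.map_apply, ofadd]
    calc μ₁ (Sum.inl ⁻¹' A) ≤ μ₂ (closure C) + ENNReal.ofReal ε₁ := step1
      _ ≤ (μ₃ ((Sum.inr ∘ Sum.inr) ⁻¹' H) + ENNReal.ofReal ε₃) + ENNReal.ofReal ε₁ :=
          add_le_add_left step2 _
      _ = μ₃ ((Sum.inr ∘ Sum.inr) ⁻¹' H) + (ENNReal.ofReal ε₁ + ENNReal.ofReal ε₃) := by
          rw [add_assoc, add_comm (ENNReal.ofReal ε₃) (ENNReal.ofReal ε₁)]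
  · -- μ₃' A ≤ μ₁' (halo) + ε
    set A₃ : Set X₃ := (Sum.inr ∘ Sum.inr) ⁻¹' A with hA₃def
    have hA₃c : IsClosed A₃ := hA.preimage (continuous_inr.comp continuous_inr)
    set C : Set X₂ := {z | ∃ y ∈ A₃, d₃ (Sum.inl z) (Sum.inr y) ≤ ε₃} with hCdef
    set H : Set (X₁ ⊕ X₂ ⊕ X₃) :=
      {p | ∃ q ∈ A, glueDist d₁ d₃ p q < ε₁ + ε₃} with hHdef
    have step1 : μ₃ A₃ ≤ μ₂ (closure C) + ENNReal.ofReal ε₃ := by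
      have hAbar : IsClosed (Sum.inr '' A₃ : Set (X₂ ⊕ X₃)) :=
        Topology.IsClosedEmbedding.inr.isClosedMap _ hA₃c
      have h := (hP₃ _ hAbar).2
      rw [m23r.map_apply, m23l.map_apply, Sum.inr_injective.preimage_image] at h
      refine h.trans (add_le_add_left (measure_mono ?_) _)
      rintro z ⟨q, ⟨y, hy, rfl⟩, hq⟩
      exact subset_closure ⟨y, hy, hq.le⟩
    have step2 : μ₂ (closure C) ≤ μ₁ (Sum.inl ⁻¹' H) + ENNReal.ofReal ε₁ := by
      have hTc : IsClosed (Sum.inr '' closure C : Set (X₁ ⊕ X₂)) :=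
        Topology.IsClosedEmbedding.inr.isClosedMap _ isClosed_closure
      have h := (hP₁ _ hTc).2
      rw [m12r.map_apply, m12l.map_apply, Sum.inr_injective.preimage_image] at h
      refine h.trans (add_le_add_left (measure_mono ?_) _)
      rintro x ⟨q, ⟨z, hz, rfl⟩, hq⟩
      -- hq : d₁ (Sum.inl x) (Sum.inr z) < ε₁, hz : z ∈ closure C
      obtain ⟨z', hz'C, hzz'⟩ := Metric.mem_closure_iff.1 hz
        (ε₁ - d₁ (Sum.inl x) (Sum.inr z)) (by linarith)
      obtain ⟨y, hyA, hyz'⟩ := hz'C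
      show ∃ q ∈ A, glueDist d₁ d₃ (Sum.inl x) q < ε₁ + ε₃
      refine ⟨Sum.inr (Sum.inr y), hyA, ?_⟩
      have hbd : BddBelow (range fun w : X₂ =>
          d₁ (Sum.inl x) (Sum.inr w) + d₃ (Sum.inl w) (Sum.inr y)) :=
        ⟨0, by rintro _ ⟨w, rfl⟩; exact add_nonneg (hd₁0 _ _) (hd₃0 _ _)⟩
      calc glueDist d₁ d₃ (Sum.inl x) (Sum.inr (Sum.inr y))
          = ⨅ w : X₂, (d₁ (Sum.inl x) (Sum.inr w) + d₃ (Sum.inl w) (Sum.inr y)) := rfl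
        _ ≤ d₁ (Sum.inl x) (Sum.inr z') + d₃ (Sum.inl z') (Sum.inr y) := ciInf_le hbd z'
        _ < ε₁ + ε₃ := by
            have t1 : d₁ (Sum.inl x) (Sum.inr z')
                ≤ d₁ (Sum.inl x) (Sum.inr z) + d₁ (Sum.inr z) (Sum.inr z') := hd₁t _ _ _
            have t2 : d₁ (Sum.inr z) (Sum.inr z') = dist z z' := h₁Z _ _
            linarith
    rw [mι₃.map_apply, mι₁.map_apply, ofadd]
    calc μ₃ ((Sum.inr ∘ Sum.inr) ⁻¹' A) ≤ μ₂ (closure C) + ENNReal.ofReal ε₃ := step1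
      _ ≤ (μ₁ (Sum.inl ⁻¹' H) + ENNReal.ofReal ε₁) + ENNReal.ofReal ε₃ :=
          add_le_add_left step2 _
      _ = μ₁ (Sum.inl ⁻¹' H) + (ENNReal.ofReal ε₁ + ENNReal.ofReal ε₃) := by
          rw [add_assoc]
end

section
/- Let f : [0,∞) → [0,∞) be continuous with f(0)=0 and compact support, and let (T^f, d^f) be the quotient of [0, σ^f] by the relation s ∼ t iff d^f(s,t)=0, where d^f(s,t) = f(s)+f(t)-2 inf_{u∈[s∧t,s∨t]} f(u). Then (T^f, d^f) satisfies the four-point condition: for all x₁,x₂,x₃,x₄, d(x₁,x₂)+d(x₃,x₄) ≤ max(d(x₁,x₃)+d(x₂,x₄), d(x₁,x₄)+d(x₂,x₃)). -/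
open Set

/-- `σ^f = sup{t : f(t) > 0}` (with `sup ∅ = 0`). -/
noncomputable def treeSigma (f : ℝ → ℝ) : ℝ := sSup {t : ℝ | 0 < f t}

/-- `d^f(s,t) = f(s) + f(t) - 2 inf_{u ∈ [s∧t, s∨t]} f(u)`. -/
noncomputable def treeDist (f : ℝ → ℝ) (s t : ℝ) : ℝ :=
  f s + f t - 2 * sInf (f '' Set.Icc (min s t) (max s t))

/-- The interval infimum `m(s,t) = inf_{u ∈ [s∧t, s∨t]} f(u)`. -/
noncomputable def treeMin (f : ℝ → ℝ) (s t : ℝ) : ℝ :=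
  sInf (f '' Set.Icc (min s t) (max s t))

namespace TreeAux

variable {f : ℝ → ℝ}

lemma mm_comm (f : ℝ → ℝ) (s t : ℝ) : treeMin f s t = treeMin f t s := by
  simp [treeMin, min_comm, max_comm]

lemma bdd (hnn : ∀ t, 0 ≤ f t) (s t : ℝ) : BddBelow (f '' Set.Icc s t) := by
  refine ⟨0, ?_⟩
  rintro y ⟨x, -, rfl⟩
  exact hnn x

lemma mm_eq {a b : ℝ} (h : a ≤ b) : treeMin f a b = sInf (f '' Set.Icc a b) := by
  rw [treeMin, min_eq_left h, max_eq_right h]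

/-- Monotonicity: the infimum over a larger interval is smaller. -/
lemma mm_mono (hnn : ∀ t, 0 ≤ f t) {a b c d : ℝ} (h1 : c ≤ a) (h2 : a ≤ b) (h3 : b ≤ d) :
    treeMin f c d ≤ treeMin f a b := by
  rw [mm_eq h2, mm_eq ((h1.trans h2).trans h3)]
  exact csInf_le_csInf (bdd hnn _ _)
    ⟨f a, mem_image_of_mem f ⟨le_rfl, h2⟩⟩
    (image_mono (f := f) (Icc_subset_Icc h1 h3))

/-- Splitting: the infimum over `[a,c]` is the min of the infima over `[a,b]`, `[b,c]`. -/
lemma mm_split (hnn : ∀ t, 0 ≤ f t) {a b c : ℝ} (h1 : a ≤ b) (h2 : b ≤ c) :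
    treeMin f a c = min (treeMin f a b) (treeMin f b c) := by
  refine le_antisymm (le_min (mm_mono hnn le_rfl h1 h2) (mm_mono hnn h1 h2 le_rfl)) ?_
  rw [mm_eq (h1.trans h2)]
  refine le_csInf ⟨f a, mem_image_of_mem f ⟨le_rfl, h1.trans h2⟩⟩ ?_
  rintro y ⟨x, ⟨hx1, hx2⟩, rfl⟩
  rcases le_total x b with h | h
  · refine (min_le_left _ _).trans ?_
    rw [mm_eq h1]
    exact csInf_le (bdd hnn _ _) ⟨x, ⟨hx1, h⟩, rfl⟩
  · refine (min_le_right _ _).trans ?_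
    rw [mm_eq h2]
    exact csInf_le (bdd hnn _ _) ⟨x, ⟨h, hx2⟩, rfl⟩

lemma caseA (hnn : ∀ t, 0 ≤ f t) {a b c d : ℝ} (h1 : a ≤ b) (h2 : b ≤ c) (h3 : c ≤ d) :
    treeMin f a c + treeMin f b d ≤ treeMin f a b + treeMin f c d :=
  add_le_add (mm_mono hnn le_rfl h1 h2) (mm_mono hnn h2 h3 le_rfl)

lemma caseB (hnn : ∀ t, 0 ≤ f t) {a b c d : ℝ} (h1 : a ≤ c) (h2 : c ≤ b) (h3 : b ≤ d) :
    min (treeMin f a c + treeMin f b d) (treeMin f a d + treeMin f b c) ≤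
      treeMin f a b + treeMin f c d := by
  have hab : treeMin f a b = min (treeMin f a c) (treeMin f c b) := mm_split hnn h1 h2
  have hcd : treeMin f c d = min (treeMin f c b) (treeMin f b d) := mm_split hnn h2 h3
  have hbc : treeMin f b c = treeMin f c b := mm_comm f b c
  have f1 : treeMin f a d ≤ treeMin f a c := mm_mono hnn le_rfl h1 (h2.trans h3)
  have f2 : treeMin f a d ≤ treeMin f c b := mm_mono hnn h1 h2 h3
  have f3 : treeMin f a d ≤ treeMin f b d := mm_mono hnn (h1.trans h2) h3 le_rfl
  rcases le_total (treeMin f a c) (treeMin f c b) with h | h <;>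
    rcases le_total (treeMin f c b) (treeMin f b d) with h' | h' <;>
      [skip; skip; skip; skip] <;>
    simp only [min_eq_left, min_eq_right, h, h'] at hab hcd <;>
    refine min_le_iff.mpr ?_
  · exact Or.inr (by linarith)
  · exact Or.inl (by linarith)
  · exact Or.inr (by linarith)
  · exact Or.inr (by linarith)

lemma caseC (hnn : ∀ t, 0 ≤ f t) {a b c d : ℝ} (h1 : a ≤ c) (h2 : c ≤ d) (h3 : d ≤ b) :
    min (treeMin f a c + treeMin f b d) (treeMin f a d + treeMin f b c) ≤
      treeMin f a b + treeMin f c d := by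
  have hab : treeMin f a b = min (treeMin f a c) (treeMin f c b) :=
    mm_split hnn h1 (h2.trans h3)
  have hcb : treeMin f c b = min (treeMin f c d) (treeMin f d b) := mm_split hnn h2 h3
  have hbc : treeMin f b c = treeMin f c b := mm_comm f b c
  have f1 : treeMin f a d ≤ treeMin f a c := mm_mono hnn le_rfl h1 h2
  have f2 : treeMin f a d ≤ treeMin f c d := mm_mono hnn h1 h2 le_rfl
  have f3 : treeMin f c b ≤ treeMin f c d := mm_mono hnn le_rfl h2 h3
  have f4 : treeMin f c b ≤ treeMin f d b := mm_mono hnn h2 h3 le_rfl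
  rcases le_total (treeMin f a c) (treeMin f c b) with h | h
  · rw [min_eq_left h] at hab
    exact min_le_iff.mpr (Or.inr (by linarith))
  · rw [min_eq_right h] at hab
    rcases le_total (treeMin f c d) (treeMin f d b) with h' | h'
    · rw [min_eq_left h'] at hcb
      exact min_le_iff.mpr (Or.inr (by linarith))
    · rw [min_eq_right h'] at hcb
      exact min_le_iff.mpr (Or.inr (by linarith))

/-- The key inequality when `a` is the minimum of the four points. -/
lemma key' (hnn : ∀ t, 0 ≤ f t) {a b c d : ℝ} (hb : a ≤ b) (hc : a ≤ c) (hd : a ≤ d) :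
    min (treeMin f a c + treeMin f b d) (treeMin f a d + treeMin f b c) ≤
      treeMin f a b + treeMin f c d := by
  rcases le_total c d with hcd | hcd
  · rcases le_total b c with hbc | hbc
    · exact min_le_of_left_le (caseA hnn hb hbc hcd)
    · rcases le_total b d with hbd | hbd
      · exact caseB hnn hc hbc hbd
      · exact caseC hnn hc hcd hbd
  · rcases le_total b d with hbd | hbd
    · have h := caseA hnn hb hbd hcd
      rw [mm_comm f d c] at h
      exact min_le_of_right_le h
    · rcases le_total b c with hbc | hbc
      · have h := caseB hnn hd hbd hbc
        rw [mm_comm f d c, min_comm] at h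
        exact h
      · have h := caseC hnn hd hcd hbc
        rw [mm_comm f d c, min_comm] at h
        exact h

/-- The key inequality for arbitrary points. -/
lemma key (hnn : ∀ t, 0 ≤ f t) (a b c d : ℝ) :
    min (treeMin f a c + treeMin f b d) (treeMin f a d + treeMin f b c) ≤
      treeMin f a b + treeMin f c d := by
  rcases le_total a b with h1 | h1 <;> rcases le_total c d with h2 | h2
  · rcases le_total a c with h3 | h3
    · exact key' hnn h1 h3 (h3.trans h2)
    · simpa [mm_comm, add_comm, min_comm] using key' (f := f) hnn h2 h3 (h3.trans h1)
  · rcases le_total a d with h3 | h3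
    · exact key' hnn h1 (h3.trans h2) h3
    · simpa [mm_comm, add_comm, min_comm] using key' (f := f) hnn h2 h3 (h3.trans h1)
  · rcases le_total b c with h3 | h3
    · simpa [mm_comm, add_comm, min_comm] using key' (f := f) hnn h1 h3 (h3.trans h2)
    · simpa [mm_comm, add_comm, min_comm] using key' (f := f) hnn h2 h3 (h3.trans h1)
  · rcases le_total b d with h3 | h3
    · simpa [mm_comm, add_comm, min_comm] using key' (f := f) hnn h1 h3 (h3.trans h2)
    · simpa [mm_comm, add_comm, min_comm] using key' (f := f) hnn h2 h3 (h3.trans h1)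

end TreeAux

/-- The tree `(T^f, d^f)`, the quotient of `[0, σ^f]` by the relation
`s ∼ t ↔ d^f(s,t) = 0`, satisfies the four-point condition; equivalently, expressed on
representatives `s₁, s₂, s₃, s₄ ∈ [0, σ^f]` of four arbitrary points of `T^f`:
`d^f(s₁,s₂) + d^f(s₃,s₄) ≤ max (d^f(s₁,s₃) + d^f(s₂,s₄)) (d^f(s₁,s₄) + d^f(s₂,s₃))`. -/
theorem treeDist_four_point_condition (f : ℝ → ℝ)
    (hcont : Continuous f) (h0 : f 0 = 0) (hnonneg : ∀ t, 0 ≤ f t)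
    (hneg : ∀ t : ℝ, t ≤ 0 → f t = 0) (hsupp : HasCompactSupport f) :
    ∀ s₁ ∈ Set.Icc 0 (treeSigma f), ∀ s₂ ∈ Set.Icc 0 (treeSigma f),
    ∀ s₃ ∈ Set.Icc 0 (treeSigma f), ∀ s₄ ∈ Set.Icc 0 (treeSigma f),
      treeDist f s₁ s₂ + treeDist f s₃ s₄ ≤
        max (treeDist f s₁ s₃ + treeDist f s₂ s₄)
          (treeDist f s₁ s₄ + treeDist f s₂ s₃) := by
  intro s₁ _ s₂ _ s₃ _ s₄ _
  have e : ∀ s t, treeDist f s t = f s + f t - 2 * treeMin f s t := fun _ _ => rfl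
  have k := TreeAux.key (f := f) hnonneg s₁ s₂ s₃ s₄
  rcases min_le_iff.mp k with h | h
  · refine le_max_of_le_left ?_
    rw [e, e, e, e]
    linarith
  · refine le_max_of_le_right ?_
    rw [e, e, e, e]
    linarith
end

section
/- If X = (X, d^X, ∅^X, μ^X) and Y = (Y, d^Y, ∅^Y, μ^Y) are compact rooted weighted metric spaces with d_GHP^c(X, Y) = 0, then there exists a bijective isometry Φ : X → Y with Φ(∅^X) = ∅^Y and Φ_*μ^X = μ^Y. -/
open MeasureTheory Metric Set

/-- The Prokhorov distance between two finite Borel measures on a metric space. -/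
noncomputable def prokhorovDist {Z : Type*} [MetricSpace Z] [MeasurableSpace Z]
    (mu nu : Measure Z) : ℝ :=
  sInf {eps : ℝ | 0 < eps ∧ ∀ A : Set Z, IsClosed A →
    mu A ≤ nu (Metric.thickening eps A) + ENNReal.ofReal eps ∧
    nu A ≤ mu (Metric.thickening eps A) + ENNReal.ofReal eps}

/-- The Gromov-Hausdorff-Prokhorov distance between two rooted weighted metric spaces:
the infimum, over all isometric embeddings of `X` and `Y` into a common Polish metric
space `Z`, of the distance between the images of the roots, plus the Hausdorff distance
between the images, plus the Prokhorov distance between the pushforward measures. -/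
noncomputable def GHP (X : Type) [MetricSpace X] [MeasurableSpace X]
    (Y : Type) [MetricSpace Y] [MeasurableSpace Y]
    (rX : X) (rY : Y) (mu : Measure X) (nu : Measure Y) : ℝ :=
  sInf {r : ℝ | ∃ (Z : Type) (_ : MetricSpace Z) (_ : MeasurableSpace Z)
    (_ : BorelSpace Z) (_ : TopologicalSpace.SeparableSpace Z) (_ : CompleteSpace Z)
    (PhiX : X → Z) (PhiY : Y → Z), Isometry PhiX ∧ Isometry PhiY ∧
    r = dist (PhiX rX) (PhiY rY)
      + Metric.hausdorffDist (Set.range PhiX) (Set.range PhiY)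
      + prokhorovDist (mu.map PhiX) (nu.map PhiY)}

lemma prokhorovDist_nonneg' {Z : Type*} [MetricSpace Z] [MeasurableSpace Z]
    (mu nu : Measure Z) : 0 ≤ prokhorovDist mu nu :=
  Real.sInf_nonneg fun _ hx => hx.1.le

open Filter Topology in
/-- If two compact rooted weighted metric spaces are at Gromov-Hausdorff-Prokhorov
distance zero, then there is a root-preserving measure-preserving bijective isometry
between them. -/
theorem GHP_eq_zero_iff_isometric
    (X : Type) [MetricSpace X] [CompactSpace X] [MeasurableSpace X] [BorelSpace X]
    (Y : Type) [MetricSpace Y] [CompactSpace Y] [MeasurableSpace Y] [BorelSpace Y]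
    (rX : X) (rY : Y) (mu : Measure X) (nu : Measure Y)
    [IsFiniteMeasure mu] [IsFiniteMeasure nu]
    (h : GHP X Y rX rY mu nu = 0) :
    ∃ Φ : X → Y, Function.Bijective Φ ∧ Isometry Φ ∧ Φ rX = rY ∧ mu.map Φ = nu := by
  haveI : Nonempty X := ⟨rX⟩
  haveI : Nonempty Y := ⟨rY⟩
  -- Step 1: for every δ > 0, there is a `δ`-almost-isometry `F : X → Y` which is
  -- root-almost-preserving, almost surjective and almost measure-preserving.
  have key : ∀ δ : ℝ, 0 < δ → ∃ F : X → Y,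
      dist (F rX) rY ≤ δ ∧
      (∀ x x' : X, dist (F x) (F x') ≤ dist x x' + δ) ∧
      (∀ x x' : X, dist x x' ≤ dist (F x) (F x') + δ) ∧
      (∀ y : Y, ∃ x : X, dist (F x) y ≤ δ) ∧
      (∀ A : Set Y, IsClosed A →
        nu A ≤ mu {x | ∃ a ∈ A, dist (F x) a ≤ δ} + ENNReal.ofReal δ) ∧
      (∀ B : Set X, IsClosed B →
        mu B ≤ nu {y | ∃ x ∈ B, dist (F x) y ≤ δ} + ENNReal.ofReal δ) := by
    intro δ hδ
    have hε : 0 < δ / 2 := by linarith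
    have h' : GHP X Y rX rY mu nu < δ / 2 := by rw [h]; exact hε
    rw [GHP] at h'
    -- the defining set is nonempty: embed into the metric sum `X ⊕ Y`.
    have hne : ∃ r, r ∈ {r : ℝ | ∃ (Z : Type) (_ : MetricSpace Z) (_ : MeasurableSpace Z)
        (_ : BorelSpace Z) (_ : TopologicalSpace.SeparableSpace Z) (_ : CompleteSpace Z)
        (PhiX : X → Z) (PhiY : Y → Z), Isometry PhiX ∧ Isometry PhiY ∧
        r = dist (PhiX rX) (PhiY rY)
          + Metric.hausdorffDist (Set.range PhiX) (Set.range PhiY)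
          + prokhorovDist (mu.map PhiX) (nu.map PhiY)} := by
      letI : MetricSpace (X ⊕ Y) := Metric.metricSpaceSum
      letI : MeasurableSpace (X ⊕ Y) := borel _
      haveI : BorelSpace (X ⊕ Y) := ⟨rfl⟩
      exact ⟨_, ⟨X ⊕ Y, inferInstance, inferInstance, inferInstance, inferInstance,
        inferInstance, Sum.inl, Sum.inr, Metric.isometry_inl, Metric.isometry_inr, rfl⟩⟩
    obtain ⟨r, hrmem, hrlt⟩ := exists_lt_of_csInf_lt hne h'
    obtain ⟨Z, _, _, _, _, _, φ, ψ, hφ, hψ, hreq⟩ := hrmem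
    have hφm : Measurable φ := hφ.continuous.measurable
    have hψm : Measurable ψ := hψ.continuous.measurable
    have hd0 : (0:ℝ) ≤ dist (φ rX) (ψ rY) := dist_nonneg
    have hdH0 : (0:ℝ) ≤ hausdorffDist (range φ) (range ψ) := hausdorffDist_nonneg
    have hdP0 : (0:ℝ) ≤ prokhorovDist (mu.map φ) (nu.map ψ) := prokhorovDist_nonneg' _ _
    have hroot : dist (φ rX) (ψ rY) < δ / 2 := by rw [hreq] at hrlt; linarith
    have hH : hausdorffDist (range φ) (range ψ) < δ / 2 := by rw [hreq] at hrlt; linarith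
    have hP : prokhorovDist (mu.map φ) (nu.map ψ) < δ / 2 := by rw [hreq] at hrlt; linarith
    -- extract a Prokhorov witness `e < δ/2`
    rw [prokhorovDist] at hP
    have hPne : ∃ M, M ∈ {eps : ℝ | 0 < eps ∧ ∀ A : Set Z, IsClosed A →
        (mu.map φ) A ≤ (nu.map ψ) (Metric.thickening eps A) + ENNReal.ofReal eps ∧
        (nu.map ψ) A ≤ (mu.map φ) (Metric.thickening eps A) + ENNReal.ofReal eps} := by
      refine ⟨(mu Set.univ).toReal + (nu Set.univ).toReal + 1, ?_, ?_⟩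
      · positivity
      · intro A _
        have hμ : (mu.map φ) A ≤ ENNReal.ofReal ((mu Set.univ).toReal
            + (nu Set.univ).toReal + 1) := by
          calc (mu.map φ) A ≤ (mu.map φ) Set.univ := measure_mono (subset_univ _)
          _ = mu Set.univ := by rw [Measure.map_apply hφm MeasurableSet.univ, preimage_univ]
          _ = ENNReal.ofReal (mu Set.univ).toReal := (ENNReal.ofReal_toReal
              (measure_ne_top _ _)).symm
          _ ≤ _ := ENNReal.ofReal_le_ofReal (by
              have h1 : 0 ≤ (nu Set.univ).toReal := ENNReal.toReal_nonneg; linarith)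
        have hν : (nu.map ψ) A ≤ ENNReal.ofReal ((mu Set.univ).toReal
            + (nu Set.univ).toReal + 1) := by
          calc (nu.map ψ) A ≤ (nu.map ψ) Set.univ := measure_mono (subset_univ _)
          _ = nu Set.univ := by rw [Measure.map_apply hψm MeasurableSet.univ, preimage_univ]
          _ = ENNReal.ofReal (nu Set.univ).toReal := (ENNReal.ofReal_toReal
              (measure_ne_top _ _)).symm
          _ ≤ _ := ENNReal.ofReal_le_ofReal (by
              have h1 : 0 ≤ (mu Set.univ).toReal := ENNReal.toReal_nonneg; linarith)
        exact ⟨le_add_of_nonneg_of_le zero_le hμ, le_add_of_nonneg_of_le zero_le hν⟩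
    obtain ⟨e, ⟨he0, hecond⟩, helt⟩ := exists_lt_of_csInf_lt hPne hP
    -- construct the almost isometry `F`
    have hcφ : IsCompact (range φ) := isCompact_range hφ.continuous
    have hcψ : IsCompact (range ψ) := isCompact_range hψ.continuous
    have hfinH : EMetric.hausdorffEdist (range φ) (range ψ) ≠ ⊤ :=
      hausdorffEdist_ne_top_of_nonempty_of_bounded (range_nonempty _) (range_nonempty _)
        hcφ.isBounded hcψ.isBounded
    have hex : ∀ x : X, ∃ y : Y, dist (φ x) (ψ y) < δ / 2 := by
      intro x
      obtain ⟨z, hz, hzd⟩ := exists_dist_lt_of_hausdorffDist_lt (mem_range_self x) hH hfinH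
      obtain ⟨y, rfl⟩ := hz
      exact ⟨y, hzd⟩
    choose F hF using hex
    refine ⟨F, ?_, ?_, ?_, ?_, ?_, ?_⟩
    · -- root
      have : dist (ψ (F rX)) (ψ rY) ≤ dist (ψ (F rX)) (φ rX) + dist (φ rX) (ψ rY) :=
        dist_triangle _ _ _
      rw [hψ.dist_eq] at this
      have h1 := hF rX
      rw [dist_comm (φ rX)] at h1
      linarith
    · intro x x'
      have : dist (ψ (F x)) (ψ (F x')) ≤ dist (ψ (F x)) (φ x) + dist (φ x) (φ x')
          + dist (φ x') (ψ (F x')) := dist_triangle4 _ _ _ _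
      rw [hψ.dist_eq, hφ.dist_eq] at this
      have h1 := hF x; have h2 := hF x'
      rw [dist_comm (φ x)] at h1
      linarith
    · intro x x'
      have : dist (φ x) (φ x') ≤ dist (φ x) (ψ (F x)) + dist (ψ (F x)) (ψ (F x'))
          + dist (ψ (F x')) (φ x') := dist_triangle4 _ _ _ _
      rw [hψ.dist_eq, hφ.dist_eq] at this
      have h1 := hF x; have h2 := hF x'
      rw [dist_comm (φ x')] at h2
      linarith
    · -- almost surjectivity
      intro y
      obtain ⟨z, hz, hzd⟩ := exists_dist_lt_of_hausdorffDist_lt' (mem_range_self y) hH hfinH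
      obtain ⟨x, rfl⟩ := hz
      refine ⟨x, ?_⟩
      have : dist (ψ (F x)) (ψ y) ≤ dist (ψ (F x)) (φ x) + dist (φ x) (ψ y) :=
        dist_triangle _ _ _
      rw [hψ.dist_eq] at this
      have h1 := hF x
      rw [dist_comm (φ x)] at h1
      linarith
    · -- measure, direction ν ≤ μ
      intro A hA
      have hAc : IsCompact (ψ '' A) := (hA.isCompact).image hψ.continuous
      have hAcl : IsClosed (ψ '' A) := hAc.isClosed
      have h1 := (hecond (ψ '' A) hAcl).2
      rw [Measure.map_apply hψm hAcl.measurableSet, preimage_image_eq A hψ.injective,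
        Measure.map_apply hφm isOpen_thickening.measurableSet] at h1
      refine h1.trans (add_le_add ?_ (ENNReal.ofReal_le_ofReal (by linarith)))
      refine measure_mono fun x hx => ?_
      rw [mem_preimage, Metric.mem_thickening_iff] at hx
      obtain ⟨z, ⟨a, ha, rfl⟩, hdz⟩ := hx
      refine ⟨a, ha, ?_⟩
      have : dist (ψ (F x)) (ψ a) ≤ dist (ψ (F x)) (φ x) + dist (φ x) (ψ a) :=
        dist_triangle _ _ _
      rw [hψ.dist_eq] at this
      have h2 := hF x
      rw [dist_comm (φ x)] at h2
      linarith
    · -- measure, direction μ ≤ ν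
      intro B hB
      have hBc : IsCompact (φ '' B) := (hB.isCompact).image hφ.continuous
      have hBcl : IsClosed (φ '' B) := hBc.isClosed
      have h1 := (hecond (φ '' B) hBcl).1
      rw [Measure.map_apply hφm hBcl.measurableSet, preimage_image_eq B hφ.injective,
        Measure.map_apply hψm isOpen_thickening.measurableSet] at h1
      refine h1.trans (add_le_add ?_ (ENNReal.ofReal_le_ofReal (by linarith)))
      refine measure_mono fun y hy => ?_
      rw [mem_preimage, Metric.mem_thickening_iff] at hy
      obtain ⟨z, ⟨x, hx, rfl⟩, hdz⟩ := hy
      refine ⟨x, hx, ?_⟩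
      have : dist (ψ (F x)) (ψ y) ≤ dist (ψ (F x)) (φ x) + dist (φ x) (ψ y) :=
        dist_triangle _ _ _
      rw [hψ.dist_eq, dist_comm (ψ (F x)) (φ x)] at this
      have h2 := hF x
      rw [dist_comm (φ x) (ψ y)] at this
      linarith
  -- Step 2: choose a sequence of almost isometries and take an ultrafilter limit.
  set d : ℕ → ℝ := fun n => 2 / (n + 1) with hd_def
  have hdpos : ∀ n : ℕ, 0 < d n := by
    intro n; have : (0:ℝ) < (n:ℝ) + 1 := by positivity
    simpa [hd_def] using by positivity
  choose F hF1 hF2 hF3 hF4 hF5 hF6 using fun n : ℕ => key (d n) (hdpos n)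
  have hdtend : Tendsto d atTop (𝓝 0) := by
    have := tendsto_one_div_add_atTop_nhds_zero_nat.const_mul (2:ℝ)
    simpa [hd_def, div_eq_mul_inv, mul_comm] using this
  set U : Ultrafilter ℕ := Ultrafilter.of atTop with hU_def
  have hUle : (U : Filter ℕ) ≤ atTop := Ultrafilter.of_le _
  have hdU : Tendsto d (U : Filter ℕ) (𝓝 0) := hdtend.mono_left hUle
  have hdUev : ∀ c : ℝ, 0 < c → ∀ᶠ n in (U : Filter ℕ), d n ≤ c :=
    fun c hc => hdU.eventually_le_const hc
  -- limits of `F n x` along the ultrafilter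
  have hlim : ∀ x : X, ∃ y : Y, Tendsto (fun n => F n x) (U : Filter ℕ) (𝓝 y) := by
    intro x
    obtain ⟨y, -, hy⟩ := (isCompact_univ (X := Y)).ultrafilter_le_nhds
      (U.map fun n => F n x) (by simp)
    exact ⟨y, by rwa [Ultrafilter.coe_map] at hy⟩
  choose Φ hΦ using hlim
  -- Φ is an isometry
  have hiso : Isometry Φ := by
    refine Isometry.of_dist_eq fun x x' => ?_
    have h1 : Tendsto (fun n => dist (F n x) (F n x')) (U : Filter ℕ)
        (𝓝 (dist (Φ x) (Φ x'))) := (hΦ x).dist (hΦ x')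
    have h2 : Tendsto (fun n => dist (F n x) (F n x')) (U : Filter ℕ) (𝓝 (dist x x')) := by
      have hsq : Tendsto (fun n => dist (F n x) (F n x') - dist x x') (U : Filter ℕ)
          (𝓝 0) := by
        refine squeeze_zero_norm (fun n => ?_) hdU
        rw [Real.norm_eq_abs, abs_sub_le_iff]
        exact ⟨by linarith [hF2 n x x'], by linarith [hF3 n x x']⟩
      have := hsq.add_const (dist x x')
      simpa using this
    exact tendsto_nhds_unique h1 h2
  -- Φ preserves the root
  have hroot : Φ rX = rY := by
    have h1 : Tendsto (fun n => dist (F n rX) rY) (U : Filter ℕ)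
        (𝓝 (dist (Φ rX) rY)) := (hΦ rX).dist tendsto_const_nhds
    have h2 : dist (Φ rX) rY ≤ 0 :=
      le_of_tendsto_of_tendsto' h1 hdU fun n => hF1 n
    exact dist_le_zero.mp h2
  -- uniform convergence along the ultrafilter
  have hunif : ∀ c : ℝ, 0 < c → ∀ᶠ n in (U : Filter ℕ),
      ∀ x : X, dist (F n x) (Φ x) ≤ c := by
    intro c hc
    obtain ⟨t, htfin, htcov⟩ := (Metric.totallyBounded_iff.mp
      (isCompact_univ (X := X)).totallyBounded) (c / 4) (by linarith)
    have E1 : ∀ᶠ n in (U : Filter ℕ), d n ≤ c / 4 := hdUev _ (by linarith)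
    have E2 : ∀ᶠ n in (U : Filter ℕ), ∀ y ∈ t, dist (F n y) (Φ y) < c / 4 := by
      rw [Filter.eventually_all_finite htfin]
      intro y _
      exact Metric.tendsto_nhds.mp (hΦ y) (c / 4) (by linarith)
    filter_upwards [E1, E2] with n h1 h2 x
    obtain ⟨y, hyt, hxy⟩ : ∃ y ∈ t, x ∈ ball y (c / 4) := by
      have := htcov (mem_univ x)
      simpa using this
    rw [mem_ball] at hxy
    have ht4 : dist (F n x) (Φ x) ≤ dist (F n x) (F n y) + dist (F n y) (Φ y)
        + dist (Φ y) (Φ x) := dist_triangle4 _ _ _ _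
    have hb1 : dist (F n x) (F n y) ≤ dist x y + d n := hF2 n x y
    have hb2 : dist (Φ y) (Φ x) = dist y x := hiso.dist_eq y x
    have hb3 := h2 y hyt
    rw [dist_comm y x] at hb2
    linarith
  -- Φ is surjective
  have hsurj : Function.Surjective Φ := by
    intro y
    choose xs hxs using fun n => hF4 n y
    obtain ⟨x0, -, hx0⟩ := (isCompact_univ (X := X)).ultrafilter_le_nhds
      (U.map xs) (by simp)
    have hx0t : Tendsto xs (U : Filter ℕ) (𝓝 x0) := by rwa [Ultrafilter.coe_map] at hx0
    refine ⟨x0, ?_⟩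
    have hkey : ∀ c : ℝ, 0 < c → dist (Φ x0) y ≤ 3 * c := by
      intro c hc
      have E1 : ∀ᶠ n in (U : Filter ℕ), dist (xs n) x0 < c :=
        Metric.tendsto_nhds.mp hx0t c hc
      have E2 := hunif c hc
      have E3 : ∀ᶠ n in (U : Filter ℕ), d n ≤ c := hdUev c hc
      obtain ⟨n, h1, h2, h3⟩ := (E1.and (E2.and E3)).exists
      have ht4 : dist (Φ x0) y ≤ dist (Φ x0) (Φ (xs n)) + dist (Φ (xs n)) (F n (xs n))
          + dist (F n (xs n)) y := dist_triangle4 _ _ _ _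
      have hb1 : dist (Φ x0) (Φ (xs n)) = dist x0 (xs n) := hiso.dist_eq _ _
      have hb2 : dist (Φ (xs n)) (F n (xs n)) = dist (F n (xs n)) (Φ (xs n)) :=
        dist_comm _ _
      have hb3 := h2 (xs n)
      have hb4 := hxs n
      rw [dist_comm x0 (xs n)] at hb1
      linarith
    have : dist (Φ x0) y ≤ 0 := by
      refine le_of_forall_pos_le_add fun c hc => ?_
      have := hkey (c / 3) (by linarith)
      linarith
    exact dist_le_zero.mp this
  -- Φ is measurable
  have hΦm : Measurable Φ := hiso.continuous.measurable
  haveI : IsFiniteMeasure (mu.map Φ) :=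
    ⟨by rw [Measure.map_apply hΦm MeasurableSet.univ]; exact measure_lt_top mu _⟩
  -- Φ pushes mu to nu
  have hthicklim : ∀ (m : Measure Y) [IsFiniteMeasure m], ∀ A : Set Y, IsClosed A →
      Tendsto (fun c : ℝ => m (thickening c A) + ENNReal.ofReal c) (𝓝[>] 0)
        (𝓝 (m A)) := by
    intro m _ A hA
    have h1 : Tendsto (fun c : ℝ => m (thickening c A)) (𝓝[>] 0) (𝓝 (m A)) :=
      tendsto_measure_thickening_of_isClosed ⟨1, one_pos, measure_ne_top m _⟩ hA
    have h2 : Tendsto (fun c : ℝ => ENNReal.ofReal c) (𝓝[>] 0) (𝓝 0) := by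
      have : Tendsto (fun c : ℝ => c) (𝓝[>] (0:ℝ)) (𝓝 0) :=
        tendsto_id.mono_right nhdsWithin_le_nhds
      simpa using ENNReal.tendsto_ofReal this
    simpa using h1.add h2
  have hmeas_eq : ∀ A : Set Y, IsClosed A → (mu.map Φ) A = nu A := by
    intro A hA
    refine le_antisymm ?_ ?_
    · -- μΦ A ≤ ν A
      have hstep : ∀ c : ℝ, 0 < c → (mu.map Φ) A ≤ nu (thickening c A) + ENNReal.ofReal c := by
        intro c hc
        have hB : IsClosed (Φ ⁻¹' A) := hA.preimage hiso.continuous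
        obtain ⟨n, h1, h2⟩ := ((hunif (c/4) (by linarith)).and (hdUev (c/4)
          (by linarith))).exists
        have h3 := hF6 n (Φ ⁻¹' A) hB
        rw [Measure.map_apply hΦm hA.measurableSet]
        refine h3.trans (add_le_add ?_ (ENNReal.ofReal_le_ofReal (by linarith)))
        refine measure_mono fun y hy => ?_
        obtain ⟨x, hxA, hxy⟩ := hy
        rw [Metric.mem_thickening_iff]
        refine ⟨Φ x, hxA, ?_⟩
        have := h1 x
        have htr : dist y (Φ x) ≤ dist y (F n x) + dist (F n x) (Φ x) := dist_triangle _ _ _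
        rw [dist_comm y (F n x)] at htr
        linarith
      refine ge_of_tendsto (hthicklim nu A hA) ?_
      exact eventually_nhdsWithin_of_forall fun c hc => hstep c hc
    · -- ν A ≤ μΦ A
      have hstep : ∀ c : ℝ, 0 < c →
          nu A ≤ (mu.map Φ) (thickening c A) + ENNReal.ofReal c := by
        intro c hc
        obtain ⟨n, h1, h2⟩ := ((hunif (c/4) (by linarith)).and (hdUev (c/4)
          (by linarith))).exists
        have h3 := hF5 n A hA
        rw [Measure.map_apply hΦm isOpen_thickening.measurableSet]
        refine h3.trans (add_le_add ?_ (ENNReal.ofReal_le_ofReal (by linarith)))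
        refine measure_mono fun x hx => ?_
        obtain ⟨a, haA, hxa⟩ := hx
        rw [mem_preimage, Metric.mem_thickening_iff]
        refine ⟨a, haA, ?_⟩
        have := h1 x
        have htr : dist (Φ x) a ≤ dist (Φ x) (F n x) + dist (F n x) a := dist_triangle _ _ _
        rw [dist_comm (Φ x) (F n x)] at htr
        linarith
      refine ge_of_tendsto (hthicklim (mu.map Φ) A hA) ?_
      exact eventually_nhdsWithin_of_forall fun c hc => hstep c hc
  have hmap : mu.map Φ = nu := by
    refine ext_of_generate_finite {s : Set Y | IsClosed s}
      (BorelSpace.measurable_eq.trans borel_eq_generateFrom_isClosed) ?_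
      (fun s hs => hmeas_eq s hs) (hmeas_eq univ isClosed_univ)
    exact fun s hs t ht _ => hs.inter ht
  exact ⟨Φ, ⟨hiso.injective, hsurj⟩, hiso, hroot, hmap⟩
end
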